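/- Let r ≥ 2 be an integer and β̃ > 0. Define C(β̃, r) = e^{β̃/r} · r for the high-temperature branch and C⁺(β̃, r) = e^{β̃/r}·(e^{β̃(r-1)u/r} + (r-1)e^{-β̃u/r}) for the low-temperature branch with u = u(β̃, r) the largest solution of the mean-field equation. At β̃ = β_c(r) with u = (r-2)/(r-1) one has C(β_c(r),r) = r·(r-1)^{2(r-1)/(r(r-2))} and C⁺(β_c(r),r) = r·(r-1)^{(r-2)/r}·(r-1)^{2(r-1)/(r(r-2))}; hence C⁺(β_c(r),r)/C(β_c(r),r) = (r-1)^{(r-2)/r}, which is strictly greater than 1 if and only if r ≥ 3. -/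

import Mathlib

/-!
Everything follows from writing `r - 1 = exp L` with `L = log (r - 1)`. The critical value is
chosen so that `β_c u = 2 L` at `u = (r-2)/(r-1)`, hence `e^{β_c(r-1)u/r} = (r-1)^{2(r-1)/r}` and
`(r-1) e^{-β_c u/r} = (r-1)^{(r-2)/r}`; their sum is `((r-1) + 1) (r-1)^{(r-2)/r}`.
Dividing `C⁺` by `C` leaves `(r-1)^{(r-2)/r}`, which exceeds `1` exactly when `r - 1 > 1`.
-/

/-- Mean-field Potts critical inverse temperature for `r > 2`. -/
noncomputable def betac (r : ℝ) : ℝ := 2 * (r - 1) / (r - 2) * Real.log (r - 1)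

open Real

lemma exp_betac_div_self {x : ℝ} (hx : 1 < x) :
    exp (betac x / x) = (x - 1) ^ (2 * (x - 1) / (x * (x - 2))) := by
  rw [rpow_def_of_pos (by linarith), betac]
  congr 1
  field_simp

lemma betac_mul_div_sub_one {x : ℝ} (h1 : x ≠ 1) (h2 : x ≠ 2) :
    betac x * ((x - 2) / (x - 1)) = 2 * log (x - 1) := by
  have h1' : x - 1 ≠ 0 := sub_ne_zero.mpr h1
  have h2' : x - 2 ≠ 0 := sub_ne_zero.mpr h2
  rw [betac]
  field_simp

lemma exp_sub_one_mul_add_sub_one_mul_exp {x : ℝ} (hx : 1 < x) :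
    exp ((x - 1) * (2 * log (x - 1)) / x) + (x - 1) * exp (-(2 * log (x - 1)) / x)
      = x * (x - 1) ^ ((x - 2) / x) := by
  have hx0 : x ≠ 0 := by positivity
  set L := log (x - 1)
  have hL : x - 1 = exp L := (exp_log (by linarith)).symm
  have hsplit : (x - 1) * (2 * L) / x = L + (x - 2) / x * L := by field_simp; ring
  have hshift : L + -(2 * L) / x = (x - 2) / x * L := by field_simp; ring
  calc exp ((x - 1) * (2 * L) / x) + (x - 1) * exp (-(2 * L) / x)
      = (x - 1) * exp ((x - 2) / x * L) + exp ((x - 2) / x * L) := by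
        rw [hsplit, exp_add, ← hshift, exp_add, ← hL]
    _ = x * (x - 1) ^ ((x - 2) / x) := by
        rw [rpow_def_of_pos (by linarith), mul_comm L]
        ring

lemma one_lt_natCast_sub_one_rpow_iff (r : ℕ) :
    1 < ((r : ℝ) - 1) ^ (((r : ℝ) - 2) / (r : ℝ)) ↔ 3 ≤ r := by
  constructor
  · intro h
    by_contra! hr
    interval_cases r <;> norm_num at h
  · intro hr
    have hr' : (3 : ℝ) ≤ r := by exact_mod_cast hr
    exact one_lt_rpow (by linarith) (div_pos (by linarith) (by linarith))

theorem critical_jump_general (r : ℕ) :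
    (3 ≤ r →
      (Real.exp (betac r / (r : ℝ)) * (r : ℝ)
          = (r : ℝ) * ((r : ℝ) - 1) ^ ((2 * ((r : ℝ) - 1)) / ((r : ℝ) * ((r : ℝ) - 2)))) ∧
      (Real.exp (betac r / (r : ℝ))
          * (Real.exp (betac r * ((r : ℝ) - 1) * (((r : ℝ) - 2) / ((r : ℝ) - 1)) / (r : ℝ))
            + ((r : ℝ) - 1)
              * Real.exp (-(betac r) * (((r : ℝ) - 2) / ((r : ℝ) - 1)) / (r : ℝ)))
          = (r : ℝ) * ((r : ℝ) - 1) ^ (((r : ℝ) - 2) / (r : ℝ))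
              * ((r : ℝ) - 1) ^ ((2 * ((r : ℝ) - 1)) / ((r : ℝ) * ((r : ℝ) - 2)))) ∧
      ((Real.exp (betac r / (r : ℝ))
          * (Real.exp (betac r * ((r : ℝ) - 1) * (((r : ℝ) - 2) / ((r : ℝ) - 1)) / (r : ℝ))
            + ((r : ℝ) - 1)
              * Real.exp (-(betac r) * (((r : ℝ) - 2) / ((r : ℝ) - 1)) / (r : ℝ))))
          / (Real.exp (betac r / (r : ℝ)) * (r : ℝ))
          = ((r : ℝ) - 1) ^ (((r : ℝ) - 2) / (r : ℝ)))) ∧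
    (1 < ((r : ℝ) - 1) ^ (((r : ℝ) - 2) / (r : ℝ)) ↔ 3 ≤ r) := by
  refine ⟨fun hr => ?_, one_lt_natCast_sub_one_rpow_iff r⟩
  have hx : (3 : ℝ) ≤ r := by exact_mod_cast hr
  set x : ℝ := (r : ℝ)
  have hβu := betac_mul_div_sub_one (x := x) (by linarith) (by linarith)
  have hC : exp (betac x / x) * x = x * (x - 1) ^ (2 * (x - 1) / (x * (x - 2))) := by
    rw [exp_betac_div_self (by linarith), mul_comm]
  have hCplus : exp (betac x / x)
      * (exp (betac x * (x - 1) * ((x - 2) / (x - 1)) / x)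
        + (x - 1) * exp (-betac x * ((x - 2) / (x - 1)) / x))
      = x * (x - 1) ^ ((x - 2) / x) * (x - 1) ^ (2 * (x - 1) / (x * (x - 2))) := by
    rw [mul_right_comm (betac x), hβu, mul_comm _ (x - 1), neg_mul, hβu,
      exp_sub_one_mul_add_sub_one_mul_exp (by linarith), exp_betac_div_self (by linarith)]
    ring
  refine ⟨hC, hCplus, ?_⟩
  have hpos : 0 < x * (x - 1) ^ (2 * (x - 1) / (x * (x - 2))) :=
    mul_pos (by linarith) (rpow_pos_of_pos (by linarith) _)
  rw [hCplus, hC, mul_right_comm, mul_div_cancel_left₀ _ hpos.ne']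

/-- The two one-sided limits of the function `C(·,r)` of the mean-field fuzzy Potts model
at the critical point `β_c(r)`, with `u = (r-2)/(r-1)`: for `r ≥ 3` one has
`C(β_c(r),r) = r (r-1)^{2(r-1)/(r(r-2))}`,
`C⁺(β_c(r),r) = r (r-1)^{(r-2)/r} (r-1)^{2(r-1)/(r(r-2))}`, and hence
`C⁺/C = (r-1)^{(r-2)/r}`; this ratio is `> 1` iff `r ≥ 3`. -/
theorem critical_jump (r : ℕ) (hr : 2 ≤ r) :
    (3 ≤ r →
      (Real.exp (betac r / (r : ℝ)) * (r : ℝ)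
          = (r : ℝ) * ((r : ℝ) - 1) ^ ((2 * ((r : ℝ) - 1)) / ((r : ℝ) * ((r : ℝ) - 2)))) ∧
      (Real.exp (betac r / (r : ℝ))
          * (Real.exp (betac r * ((r : ℝ) - 1) * (((r : ℝ) - 2) / ((r : ℝ) - 1)) / (r : ℝ))
            + ((r : ℝ) - 1)
              * Real.exp (-(betac r) * (((r : ℝ) - 2) / ((r : ℝ) - 1)) / (r : ℝ)))
          = (r : ℝ) * ((r : ℝ) - 1) ^ (((r : ℝ) - 2) / (r : ℝ))
              * ((r : ℝ) - 1) ^ ((2 * ((r : ℝ) - 1)) / ((r : ℝ) * ((r : ℝ) - 2)))) ∧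
      ((Real.exp (betac r / (r : ℝ))
          * (Real.exp (betac r * ((r : ℝ) - 1) * (((r : ℝ) - 2) / ((r : ℝ) - 1)) / (r : ℝ))
            + ((r : ℝ) - 1)
              * Real.exp (-(betac r) * (((r : ℝ) - 2) / ((r : ℝ) - 1)) / (r : ℝ))))
          / (Real.exp (betac r / (r : ℝ)) * (r : ℝ))
          = ((r : ℝ) - 1) ^ (((r : ℝ) - 2) / (r : ℝ)))) ∧
    (1 < ((r : ℝ) - 1) ^ (((r : ℝ) - 2) / (r : ℝ)) ↔ 3 ≤ r) :=
  critical_jump_general r
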